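/- Let P be a regular H-palindromic matrix polynomial of degree m with n×n coefficients, let λ ∈ ℂ with |λ| = 1, and let x ∈ ℂⁿ with ‖x‖₂ = 1; set r := −P(λ)x. Then the Frobenius-norm structured backward error over the class S_p of H-palindromic polynomials of degree m satisfies η_F^{S_p}(λ, x, P) = √( (2‖r‖₂² − |rᴴx|²)/(m+1) ); in particular η_F^{S_p}(λ, x, P) ≤ √2 · ‖r‖₂/√(m+1). -/

import Mathlib

noncomputable section

/-- Euclidean (ℓ²) norm of a complex vector. -/
def vnorm {α : Type*} [Fintype α] (x : α → ℂ) : ℝ :=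
  Real.sqrt (∑ i, ‖x i‖ ^ 2)

/-- Frobenius norm of a complex matrix. -/
def frobNorm {α : Type*} [Fintype α] (A : Matrix α α ℂ) : ℝ :=
  Real.sqrt (∑ i, ∑ j, ‖A i j‖ ^ 2)

/-- Spectral (operator 2-)norm of a complex matrix. -/
def specNorm {α : Type*} [Fintype α] [DecidableEq α] (A : Matrix α α ℂ) : ℝ :=
  ‖Matrix.toEuclideanCLM (𝕜 := ℂ) A‖

/-- Evaluation of the matrix polynomial `P(z) = ∑_{j=0}^m z^j A_j`. -/
def evalP {n : ℕ} (m : ℕ) (A : ℕ → Matrix (Fin n) (Fin n) ℂ) (z : ℂ) :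
    Matrix (Fin n) (Fin n) ℂ :=
  ∑ j ∈ Finset.range (m + 1), z ^ j • A j

/-- `‖Λ_m‖₂² = ∑_{j=0}^m |λ|^{2j}` where `Λ_m = (1, λ, …, λ^m)ᵀ`. -/
def LamNormSq (m : ℕ) (lam : ℂ) : ℝ :=
  ∑ j ∈ Finset.range (m + 1), ‖lam‖ ^ (2 * j)

/-- `‖Π₊(Λ_m)‖₂²`. -/
def PiPlusSq (m : ℕ) (lam : ℂ) : ℝ :=
  if m % 2 = 1 then
    ∑ j ∈ Finset.range ((m + 1) / 2), ‖lam ^ j + lam ^ (m - j)‖ ^ 2 / 2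
  else
    (∑ j ∈ Finset.range (m / 2), ‖lam ^ j + lam ^ (m - j)‖ ^ 2 / 2) + ‖lam ^ (m / 2)‖ ^ 2

/-- `‖Π₋(Λ_m)‖₂²`. -/
def PiMinusSq (m : ℕ) (lam : ℂ) : ℝ :=
  if m % 2 = 1 then
    ∑ j ∈ Finset.range ((m + 1) / 2), ‖lam ^ j - lam ^ (m - j)‖ ^ 2 / 2
  else
    ∑ j ∈ Finset.range (m / 2), ‖lam ^ j - lam ^ (m - j)‖ ^ 2 / 2

/-- Frobenius-norm structured backward error over H-palindromic polynomials of degree `m`. -/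
def etaF_Hpal {n : ℕ} (m : ℕ) (A : ℕ → Matrix (Fin n) (Fin n) ℂ) (lam : ℂ)
    (x : Fin n → ℂ) : ℝ :=
  sInf { e : ℝ | ∃ Δ : ℕ → Matrix (Fin n) (Fin n) ℂ,
    (∀ j ≤ m, Δ (m - j) = (Δ j).conjTranspose) ∧
    (evalP m A lam).mulVec x + (evalP m Δ lam).mulVec x = 0 ∧
    e = Real.sqrt (∑ j ∈ Finset.range (m + 1), frobNorm (Δ j) ^ 2) }

/-!
For `‖λ‖ = 1` the palindromic symmetry of the coefficients gives `Q(λ)ᴴ = conj λ ^ m • Q(λ)` for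
every H-palindromic `Q`. For an admissible perturbation, `G := ΔP(λ)` therefore satisfies `G x = r`
and `Gᴴ x = conj λ ^ m • r`, and any matrix with these two products has
`‖G‖_F² ≥ 2‖r‖² - |xᴴ r|²`: the rows of `G - (G x) xᴴ` lose exactly `‖r‖²`, and its columns still
carry `‖r‖² - |xᴴ r|²` by Cauchy–Schwarz against `x`. Since `‖ΔP(λ)‖_F² ≤ (m + 1) |||ΔP|||_F²`,
this bounds the backward error from below. The bound is attained by the rank-two coefficients
`ΔA_j = (conj λ ^ j • r xᴴ + λ ^ (m - j) • x (r - (xᴴ r) x)ᴴ) / (m + 1)`, which are palindromic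
because `xᴴ r = λ ^ m • conj (xᴴ r)`.
-/

open Matrix Finset

lemma star_pow_mul_pow_of_norm_eq_one {z : ℂ} (hz : ‖z‖ = 1) (k : ℕ) :
    star z ^ k * z ^ k = 1 := by
  rw [← mul_pow, Complex.star_def, Complex.conj_mul', hz]
  norm_num

section Vectors

variable {ι : Type*} [Fintype ι]

lemma vnorm_eq_norm_toLp (v : ι → ℂ) :
    vnorm v = ‖(WithLp.toLp 2 v : EuclideanSpace ℂ ι)‖ := by
  simp [vnorm, EuclideanSpace.norm_eq]

lemma vnorm_nonneg (v : ι → ℂ) : 0 ≤ vnorm v :=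
  Real.sqrt_nonneg _

lemma vnorm_sq (v : ι → ℂ) : vnorm v ^ 2 = ∑ i, ‖v i‖ ^ 2 :=
  Real.sq_sqrt (by positivity)

lemma vnorm_star (v : ι → ℂ) : vnorm (star v) = vnorm v := by
  simp [vnorm]

lemma vnorm_smul (c : ℂ) (v : ι → ℂ) : vnorm (c • v) = ‖c‖ * vnorm v := by
  simp only [vnorm_eq_norm_toLp, WithLp.toLp_smul, norm_smul]

lemma star_dotProduct_self (v : ι → ℂ) : star v ⬝ᵥ v = ((vnorm v ^ 2 : ℝ) : ℂ) := by
  have h := inner_self_eq_norm_sq_to_K (𝕜 := ℂ) (WithLp.toLp 2 v : EuclideanSpace ℂ ι)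
  rw [EuclideanSpace.inner_toLp_toLp, dotProduct_comm] at h
  rw [h, vnorm_eq_norm_toLp]
  norm_cast

lemma norm_star_dotProduct_le {x : ι → ℂ} (hx : vnorm x = 1) (a : ι → ℂ) :
    ‖star x ⬝ᵥ a‖ ≤ vnorm a := by
  have h := norm_inner_le_norm (𝕜 := ℂ) (WithLp.toLp 2 x) (WithLp.toLp 2 a)
  rwa [EuclideanSpace.inner_toLp_toLp, dotProduct_comm, ← vnorm_eq_norm_toLp,
    ← vnorm_eq_norm_toLp, hx, one_mul] at h

lemma norm_sub_inner_smul_sq {E : Type*} [NormedAddCommGroup E] [InnerProductSpace ℂ E]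
    {x : E} (hx : ‖x‖ = 1) (a : E) :
    ‖a - inner ℂ x a • x‖ ^ 2 = ‖a‖ ^ 2 - ‖inner ℂ x a‖ ^ 2 := by
  rw [@norm_sub_sq ℂ, inner_smul_right, norm_smul, hx, ← inner_conj_symm, RCLike.conj_mul,
    RCLike.norm_conj]
  norm_cast
  ring

lemma vnorm_sub_dotProduct_smul_sq {x : ι → ℂ} (hx : vnorm x = 1) (a : ι → ℂ) :
    vnorm (a - (star x ⬝ᵥ a) • x) ^ 2 = vnorm a ^ 2 - ‖star x ⬝ᵥ a‖ ^ 2 := by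
  rw [vnorm_eq_norm_toLp] at hx
  have h := norm_sub_inner_smul_sq hx (WithLp.toLp 2 a)
  rwa [EuclideanSpace.inner_toLp_toLp, dotProduct_comm, ← WithLp.toLp_smul, ← WithLp.toLp_sub,
    ← vnorm_eq_norm_toLp, ← vnorm_eq_norm_toLp] at h

lemma star_dotProduct_sub_dotProduct_smul {x : ι → ℂ} (hx : vnorm x = 1) (a : ι → ℂ) :
    star x ⬝ᵥ (a - (star x ⬝ᵥ a) • x) = 0 := by
  rw [dotProduct_sub, dotProduct_smul, star_dotProduct_self, hx, smul_eq_mul]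
  simp

lemma vnorm_smul_add_smul_sq {b d : ι → ℂ} (hbd : star b ⬝ᵥ d = 0) (α γ : ℂ) :
    vnorm (α • b + γ • d) ^ 2 = ‖α‖ ^ 2 * vnorm b ^ 2 + ‖γ‖ ^ 2 * vnorm d ^ 2 := by
  have h : inner ℂ (WithLp.toLp 2 (α • b) : EuclideanSpace ℂ ι) (WithLp.toLp 2 (γ • d)) = 0 := by
    rw [EuclideanSpace.inner_toLp_toLp, dotProduct_comm, star_smul, smul_dotProduct,
      dotProduct_smul, hbd, smul_zero, smul_zero]
  rw [vnorm_eq_norm_toLp, WithLp.toLp_add, @norm_add_sq ℂ, h, map_zero,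
    ← vnorm_eq_norm_toLp, ← vnorm_eq_norm_toLp, vnorm_smul, vnorm_smul]
  ring

end Vectors

section Matrices

variable {ι : Type*} [Fintype ι]

attribute [local instance] Matrix.frobeniusNormedAddCommGroup Matrix.frobeniusNormedSpace

lemma frobNorm_eq_norm (A : Matrix ι ι ℂ) : frobNorm A = ‖A‖ := by
  simp [frobNorm, Matrix.frobenius_norm_def, Real.sqrt_eq_rpow]

lemma frobNorm_sq (A : Matrix ι ι ℂ) : frobNorm A ^ 2 = ∑ i, vnorm (A i) ^ 2 := by
  simp only [frobNorm, vnorm_sq]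
  exact Real.sq_sqrt (by positivity)

lemma frobNorm_transpose (A : Matrix ι ι ℂ) : frobNorm Aᵀ = frobNorm A := by
  simp only [frobNorm_eq_norm, Matrix.frobenius_norm_transpose]

lemma frobNorm_sq_vecMulVec_add_vecMulVec {b d : ι → ℂ} (hbd : star b ⬝ᵥ d = 0)
    (a c : ι → ℂ) :
    frobNorm (vecMulVec a (star b) + vecMulVec c (star d)) ^ 2
      = vnorm a ^ 2 * vnorm b ^ 2 + vnorm c ^ 2 * vnorm d ^ 2 := by
  have hrow : ∀ i, (vecMulVec a (star b) + vecMulVec c (star d)) i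
      = star (star (a i) • b + star (c i) • d) := fun i => by
    ext k; simp [vecMulVec_apply]
  simp only [frobNorm_sq, hrow, vnorm_star, vnorm_smul_add_smul_sq hbd, norm_star, vnorm_sq,
    Finset.sum_add_distrib, ← Finset.sum_mul]

lemma le_sq_frobNorm {x y : ι → ℂ} (hx : vnorm x = 1) (hy : vnorm y = 1) (G : Matrix ι ι ℂ) :
    vnorm (G *ᵥ y) ^ 2 + vnorm (Gᴴ *ᵥ x) ^ 2 - ‖star x ⬝ᵥ G *ᵥ y‖ ^ 2 ≤ frobNorm G ^ 2 := by
  set ρ := G - vecMulVec (G *ᵥ y) (star y)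
  have hy' : vnorm (star y) = 1 := by rw [vnorm_star, hy]
  have hrows : frobNorm ρ ^ 2 = frobNorm G ^ 2 - vnorm (G *ᵥ y) ^ 2 := by
    have h : ∀ i, ρ i = G i - (star (star y) ⬝ᵥ G i) • star y := fun i => by
      ext k; simp [ρ, vecMulVec_apply, mulVec, dotProduct_comm]
    simp only [frobNorm_sq, h, vnorm_sub_dotProduct_smul_sq hy', vnorm_sq, Finset.sum_sub_distrib]
    simp [mulVec, dotProduct_comm]
  have hcols : vnorm (star x ᵥ* ρ) ^ 2 ≤ frobNorm ρ ^ 2 := by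
    rw [← frobNorm_transpose, frobNorm_sq, vnorm_sq]
    exact Finset.sum_le_sum fun k _ =>
      pow_le_pow_left₀ (norm_nonneg _) (norm_star_dotProduct_le hx _) 2
  have hw : star x ᵥ* G = star (Gᴴ *ᵥ x) := by
    rw [star_mulVec, conjTranspose_conjTranspose]
  have hc : star (star y) ⬝ᵥ star (Gᴴ *ᵥ x) = star x ⬝ᵥ G *ᵥ y := by
    rw [star_star, ← hw, dotProduct_comm, dotProduct_mulVec]
  have hxρ : star x ᵥ* ρ = star (Gᴴ *ᵥ x) - (star (star y) ⬝ᵥ star (Gᴴ *ᵥ x)) • star y := by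
    rw [vecMul_sub, vecMul_vecMulVec, hw, hc]
  rw [hxρ, vnorm_sub_dotProduct_smul_sq hy', vnorm_star, hc] at hcols
  linarith

lemma star_dotProduct_mulVec_of_conjTranspose_eq_smul {G : Matrix ι ι ℂ} {μ : ℂ}
    (hG : Gᴴ = μ • G) (x : ι → ℂ) :
    star (star x ⬝ᵥ G *ᵥ x) = μ * (star x ⬝ᵥ G *ᵥ x) := by
  rw [← star_dotProduct, star_mulVec, ← dotProduct_mulVec, hG, smul_mulVec,
    dotProduct_smul, smul_eq_mul]

def palindromicPerturbation (m : ℕ) (lam : ℂ) (x r : ι → ℂ) (j : ℕ) : Matrix ι ι ℂ :=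
  ((m : ℂ) + 1)⁻¹ • (vecMulVec (star lam ^ j • r) (star x)
    + vecMulVec (lam ^ (m - j) • x) (star (r - (star x ⬝ᵥ r) • x)))

variable {m : ℕ} {lam : ℂ} {x r : ι → ℂ}

lemma palindromicPerturbation_mulVec (hx : vnorm x = 1) (j : ℕ) :
    palindromicPerturbation m lam x r j *ᵥ x = ((m : ℂ) + 1)⁻¹ • star lam ^ j • r := by
  have hperp : star (r - (star x ⬝ᵥ r) • x) ⬝ᵥ x = 0 := by
    rw [star_dotProduct, star_dotProduct_sub_dotProduct_smul hx, star_zero]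
  simp only [palindromicPerturbation, smul_mulVec, add_mulVec, vecMulVec_mulVec, hperp,
    star_dotProduct_self, hx]
  simp

lemma palindromicPerturbation_conjTranspose (hlam : ‖lam‖ = 1)
    (hc : star (star x ⬝ᵥ r) = star lam ^ m * (star x ⬝ᵥ r)) {j : ℕ} (hj : j ≤ m) :
    palindromicPerturbation m lam x r (m - j) = (palindromicPerturbation m lam x r j)ᴴ := by
  obtain ⟨k, rfl⟩ := Nat.exists_eq_add_of_le hj
  have hunit := star_pow_mul_pow_of_norm_eq_one hlam j
  simp only [Complex.star_def] at hc hunit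
  ext a b
  simp only [palindromicPerturbation, Nat.cast_add, RCLike.star_def, add_tsub_cancel_left,
    add_tsub_cancel_right, smul_vecMulVec, star_sub, star_smul, Matrix.smul_apply,
    Matrix.add_apply, vecMulVec_apply, Pi.star_apply, smul_eq_mul, Pi.sub_apply, Pi.smul_apply,
    smul_add, conjTranspose_apply, star_add, star_mul', star_inv₀, star_natCast, star_one,
    star_pow, RingHomCompTriple.comp_apply, RingHom.id_apply]
  linear_combination ((j : ℂ) + k + 1)⁻¹ * x a * starRingEnd ℂ (x b) *
    (-(lam ^ j) * hc - starRingEnd ℂ lam ^ k * (star x ⬝ᵥ r) * hunit)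

lemma frobNorm_palindromicPerturbation_sq (hlam : ‖lam‖ = 1) (hx : vnorm x = 1) (j : ℕ) :
    frobNorm (palindromicPerturbation m lam x r j) ^ 2
      = (2 * vnorm r ^ 2 - ‖star x ⬝ᵥ r‖ ^ 2) / (m + 1) ^ 2 := by
  rw [palindromicPerturbation, frobNorm_eq_norm, norm_smul, mul_pow, ← frobNorm_eq_norm,
    frobNorm_sq_vecMulVec_add_vecMulVec (star_dotProduct_sub_dotProduct_smul hx r),
    vnorm_smul, vnorm_smul, vnorm_sub_dotProduct_smul_sq hx, hx]
  have hm : ‖(m : ℂ) + 1‖ = m + 1 := by exact_mod_cast Complex.norm_natCast (m + 1)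
  simp only [norm_inv, hm, norm_pow, norm_star, hlam, one_pow]
  field_simp
  ring

end Matrices

section MatrixPolynomials

variable {n m : ℕ} {lam : ℂ} {x r : Fin n → ℂ}

attribute [local instance] Matrix.frobeniusNormedAddCommGroup Matrix.frobeniusNormedSpace

lemma mulVec_evalP (B : ℕ → Matrix (Fin n) (Fin n) ℂ) (z : ℂ) (x : Fin n → ℂ) :
    evalP m B z *ᵥ x = ∑ j ∈ range (m + 1), z ^ j • (B j *ᵥ x) := by
  simp only [evalP, sum_mulVec, smul_mulVec]

lemma evalP_conjTranspose_of_palindromic {B : ℕ → Matrix (Fin n) (Fin n) ℂ}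
    (hB : ∀ j ≤ m, B (m - j) = (B j)ᴴ) {z : ℂ} (hz : ‖z‖ = 1) :
    (evalP m B z)ᴴ = star z ^ m • evalP m B z := by
  have hterm : ∀ j ∈ range (m + 1),
      star z ^ (m - j) • B (m - (m - j)) = star z ^ m • z ^ j • B j := by
    intro j hj
    have hj : j ≤ m := Finset.mem_range_succ_iff.mp hj
    rw [Nat.sub_sub_self hj, smul_smul]
    congr 1
    conv_rhs => rw [← Nat.sub_add_cancel hj, pow_add, mul_assoc,
      star_pow_mul_pow_of_norm_eq_one hz, mul_one]
  calc (evalP m B z)ᴴ = ∑ j ∈ range (m + 1), star z ^ j • B (m - j) := by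
        rw [evalP, conjTranspose_sum]
        refine sum_congr rfl fun j hj => ?_
        rw [conjTranspose_smul, star_pow, hB j (Finset.mem_range_succ_iff.mp hj)]
    _ = ∑ j ∈ range (m + 1), star z ^ (m - j) • B (m - (m - j)) := by
        simpa using (sum_range_reflect (fun j => star z ^ j • B (m - j)) (m + 1)).symm
    _ = star z ^ m • evalP m B z := by
        rw [sum_congr rfl hterm, ← smul_sum, evalP]

lemma sq_frobNorm_evalP_le (B : ℕ → Matrix (Fin n) (Fin n) ℂ) {z : ℂ} (hz : ‖z‖ ≤ 1) :
    frobNorm (evalP m B z) ^ 2 ≤ (m + 1) * ∑ j ∈ range (m + 1), frobNorm (B j) ^ 2 := by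
  have htri : frobNorm (evalP m B z) ≤ ∑ j ∈ range (m + 1), frobNorm (B j) := by
    simp only [frobNorm_eq_norm, evalP]
    refine (norm_sum_le _ _).trans (sum_le_sum fun j _ => ?_)
    rw [norm_smul, norm_pow]
    exact mul_le_of_le_one_left (norm_nonneg _) (pow_le_one₀ (norm_nonneg _) hz)
  calc frobNorm (evalP m B z) ^ 2 ≤ (∑ j ∈ range (m + 1), frobNorm (B j)) ^ 2 :=
        pow_le_pow_left₀ (by rw [frobNorm_eq_norm]; positivity) htri 2
    _ ≤ (m + 1) * ∑ j ∈ range (m + 1), frobNorm (B j) ^ 2 := by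
        simpa using sq_sum_le_card_mul_sum_sq (s := range (m + 1)) (f := fun j => frobNorm (B j))

lemma evalP_palindromicPerturbation_mulVec (hlam : ‖lam‖ = 1) (hx : vnorm x = 1) :
    evalP m (palindromicPerturbation m lam x r) lam *ᵥ x = r := by
  have hterm : ∀ j ∈ range (m + 1),
      lam ^ j • (palindromicPerturbation m lam x r j *ᵥ x) = ((m : ℂ) + 1)⁻¹ • r := by
    intro j _
    rw [palindromicPerturbation_mulVec hx, smul_comm, smul_smul (lam ^ j), mul_comm (lam ^ j),
      star_pow_mul_pow_of_norm_eq_one hlam, one_smul]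
  rw [mulVec_evalP, sum_congr rfl hterm, sum_const, card_range, ← Nat.cast_smul_eq_nsmul ℂ,
    smul_smul]
  push_cast
  rw [mul_inv_cancel₀ (by exact_mod_cast Nat.succ_ne_zero m), one_smul]

lemma le_sum_sq_frobNorm_of_palindromic {Δ : ℕ → Matrix (Fin n) (Fin n) ℂ}
    (hΔ : ∀ j ≤ m, Δ (m - j) = (Δ j)ᴴ) (hlam : ‖lam‖ = 1) (hx : vnorm x = 1)
    (hr : evalP m Δ lam *ᵥ x = r) :
    (2 * vnorm r ^ 2 - ‖star x ⬝ᵥ r‖ ^ 2) / (m + 1)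
      ≤ ∑ j ∈ range (m + 1), frobNorm (Δ j) ^ 2 := by
  have h := le_sq_frobNorm hx hx (evalP m Δ lam)
  rw [evalP_conjTranspose_of_palindromic hΔ hlam, smul_mulVec, hr, vnorm_smul, norm_pow,
    norm_star, hlam, one_pow, one_mul] at h
  rw [div_le_iff₀ (by positivity)]
  nlinarith [sq_frobNorm_evalP_le (m := m) Δ hlam.le]

theorem etaF_Hpal_eq {A : ℕ → Matrix (Fin n) (Fin n) ℂ} (hA : ∀ j ≤ m, A (m - j) = (A j)ᴴ)
    (hlam : ‖lam‖ = 1) (hx : vnorm x = 1) (hr : r = -(evalP m A lam *ᵥ x)) :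
    etaF_Hpal m A lam x = Real.sqrt ((2 * vnorm r ^ 2 - ‖star r ⬝ᵥ x‖ ^ 2) / (m + 1)) := by
  have hc : star (star x ⬝ᵥ r) = star lam ^ m * (star x ⬝ᵥ r) := by
    rw [hr, dotProduct_neg, star_neg, star_dotProduct_mulVec_of_conjTranspose_eq_smul
      (evalP_conjTranspose_of_palindromic hA hlam)]
    ring
  have hsolves : ∀ Δ : ℕ → Matrix (Fin n) (Fin n) ℂ,
      evalP m A lam *ᵥ x + evalP m Δ lam *ᵥ x = 0 ↔ evalP m Δ lam *ᵥ x = r := fun Δ => by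
    rw [hr, eq_neg_iff_add_eq_zero, add_comm]
  rw [star_dotProduct, norm_star]
  refine IsLeast.csInf_eq ⟨⟨palindromicPerturbation m lam x r,
    fun j hj => palindromicPerturbation_conjTranspose hlam hc hj,
    (hsolves _).2 (evalP_palindromicPerturbation_mulVec hlam hx), ?_⟩, ?_⟩
  · rw [sum_congr rfl fun j _ => frobNorm_palindromicPerturbation_sq hlam hx j, sum_const,
      card_range, nsmul_eq_mul]
    push_cast
    field_simp
  · rintro e ⟨Δ, hΔ, hsol, rfl⟩
    exact Real.sqrt_le_sqrt (le_sum_sq_frobNorm_of_palindromic hΔ hlam hx ((hsolves Δ).1 hsol))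

end MatrixPolynomials

theorem stmt_11_general {m n : ℕ}
    (A : ℕ → Matrix (Fin n) (Fin n) ℂ)
    (hpal : ∀ j ≤ m, A (m - j) = (A j).conjTranspose)
    (lam : ℂ) (hlam : ‖lam‖ = 1)
    (x : Fin n → ℂ) (hx : vnorm x = 1)
    (r : Fin n → ℂ) (hr : r = -(evalP m A lam).mulVec x) :
    etaF_Hpal m A lam x =
        Real.sqrt ((2 * vnorm r ^ 2 - ‖dotProduct (star r) x‖ ^ 2) / ((m : ℝ) + 1)) ∧
      etaF_Hpal m A lam x ≤ Real.sqrt 2 * vnorm r / Real.sqrt ((m : ℝ) + 1) := by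
  have hη := etaF_Hpal_eq hpal hlam hx hr
  refine ⟨hη, ?_⟩
  calc etaF_Hpal m A lam x ≤ Real.sqrt (2 * vnorm r ^ 2 / ((m : ℝ) + 1)) := by
        rw [hη]
        gcongr
        linarith [sq_nonneg ‖star r ⬝ᵥ x‖]
    _ = Real.sqrt 2 * vnorm r / Real.sqrt ((m : ℝ) + 1) := by
        rw [Real.sqrt_div' _ (by positivity), Real.sqrt_mul zero_le_two,
          Real.sqrt_sq (vnorm_nonneg r)]

/-- Frobenius structured backward error, H-palindromic, |λ| = 1. -/
theorem stmt_11 {m n : ℕ} (hm : 0 < m) (hn : 0 < n)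
    (A : ℕ → Matrix (Fin n) (Fin n) ℂ)
    (hpal : ∀ j ≤ m, A (m - j) = (A j).conjTranspose)
    (hreg : ∃ z : ℂ, (evalP m A z).det ≠ 0)
    (lam : ℂ) (hlam : ‖lam‖ = 1)
    (x : Fin n → ℂ) (hx : vnorm x = 1)
    (r : Fin n → ℂ) (hr : r = -(evalP m A lam).mulVec x) :
    etaF_Hpal m A lam x =
        Real.sqrt ((2 * vnorm r ^ 2 - ‖dotProduct (star r) x‖ ^ 2) / ((m : ℝ) + 1)) ∧
      etaF_Hpal m A lam x ≤ Real.sqrt 2 * vnorm r / Real.sqrt ((m : ℝ) + 1) :=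
  stmt_11_general A hpal lam hlam x hx r hr
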